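/- arXiv:2406.02526 — 2 statements merged into one kernel-verified Lean document; each statement's English description precedes it below -/
import Mathlib

section
/- Assume the admissibility hypothesis. Then for every r ≥ 0, the subset [X,Y]^{(r+1)} is a subgroup of the group [X,Y]. -/
/-- The wedge `X₁ ∨ X₂` of two pointed spaces: the quotient of `X₁ ⊔ X₂`
identifying the two basepoints. -/
def Wedge (X₁ X₂ : Type*) [TopologicalSpace X₁] [TopologicalSpace X₂] (p₁ : X₁) (p₂ : X₂) :=
  Quot fun a b : X₁ ⊕ X₂ => a = Sum.inl p₁ ∧ b = Sum.inr p₂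

instance (X₁ X₂ : Type*) [TopologicalSpace X₁] [TopologicalSpace X₂] (p₁ : X₁) (p₂ : X₂) :
    TopologicalSpace (Wedge X₁ X₂ p₁ p₂) :=
  inferInstanceAs (TopologicalSpace (Quot _))

namespace Wedge

variable (X₁ X₂ : Type*) [TopologicalSpace X₁] [TopologicalSpace X₂] (p₁ : X₁) (p₂ : X₂)

/-- The basepoint of the wedge. -/
def pt : Wedge X₁ X₂ p₁ p₂ := Quot.mk _ (Sum.inl p₁)

/-- The inclusion of the first summand. -/
def inl : C(X₁, Wedge X₁ X₂ p₁ p₂) :=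
  ⟨fun x => Quot.mk _ (Sum.inl x), continuous_quot_mk.comp continuous_inl⟩

/-- The inclusion of the second summand. -/
def inr : C(X₂, Wedge X₁ X₂ p₁ p₂) :=
  ⟨fun x => Quot.mk _ (Sum.inr x), continuous_quot_mk.comp continuous_inr⟩

theorem inl_pt : inl X₁ X₂ p₁ p₂ p₁ = pt X₁ X₂ p₁ p₂ := rfl

theorem inr_pt : inr X₁ X₂ p₁ p₂ p₂ = pt X₁ X₂ p₁ p₂ := (Quot.sound ⟨rfl, rfl⟩).symm

variable {X₁ X₂ p₁ p₂} {Y : Type*} [TopologicalSpace Y]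

/-- `a ∇ b` : the map `X₁ ∨ X₂ → Y` restricting to `a` and `b` on the two summands. -/
def elim (a : C(X₁, Y)) (b : C(X₂, Y)) (hab : a p₁ = b p₂) : C(Wedge X₁ X₂ p₁ p₂, Y) :=
  ⟨Quot.lift (Sum.elim a b)
      (by rintro s t ⟨hs, ht⟩; subst hs; subst ht; simpa using hab),
    continuous_quot_lift _ (a.continuous.sumElim b.continuous)⟩

end Wedge

/-- Basepoint-preserving continuous maps. -/
def PtdMap (X Y : Type*) [TopologicalSpace X] [TopologicalSpace Y] (x₀ : X) (y₀ : Y) :=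
  {f : C(X, Y) // f x₀ = y₀}

section Ptd

variable {X Y : Type*} [TopologicalSpace X] [TopologicalSpace Y] {x₀ : X} {y₀ : Y}

/-- The restriction homomorphism `⟨Y^X⟩ → ⟨Y^T⟩` on the free abelian group on
basepoint-preserving maps, `⟨a⟩ ↦ ⟨a|_T⟩`. -/
noncomputable def restrictEnsP (T : Set X) : (PtdMap X Y x₀ y₀ →₀ ℤ) →+ (C(T, Y) →₀ ℤ) :=
  Finsupp.mapDomain.addMonoidHom fun a => a.1.restrict T

/-- `A ∈ ⟨Y^X⟩^{(s)}`: the restriction of `A` to every finite subset with fewer than `s`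
points vanishes. -/
def inFiltP (s : ℕ) (A : PtdMap X Y x₀ y₀ →₀ ℤ) : Prop :=
  ∀ T : Set X, T.Finite → T.ncard < s → restrictEnsP T A = 0

/-- Basepoint-preserving homotopy: homotopy rel the basepoint. -/
def PHtpc (a b : PtdMap X Y x₀ y₀) : Prop :=
  ContinuousMap.HomotopicRel a.1 b.1 {x₀}

/-- `a ∼_r b` : some integral combination `A` of basepoint-preserving maps homotopic
to `a` satisfies `A ≡_r ⟨b⟩`, i.e. `A - ⟨b⟩ ∈ ⟨Y^X⟩^{(r+1)}`. -/
def similarP (r : ℕ) (a b : PtdMap X Y x₀ y₀) : Prop :=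
  ∃ A : PtdMap X Y x₀ y₀ →₀ ℤ, (∀ c ∈ A.support, PHtpc c a) ∧
    inFiltP (r + 1) (A - Finsupp.single b 1)

/-- The constant map `⊲` at the basepoint. -/
def constP : PtdMap X Y x₀ y₀ := ⟨ContinuousMap.const X y₀, rfl⟩

/-- `a ∇ b` for basepoint-preserving maps, as a basepoint-preserving map on the wedge. -/
def wedgeElimP (a b : PtdMap X Y x₀ y₀) :
    PtdMap (Wedge X X x₀ x₀) Y (Wedge.pt X X x₀ x₀) y₀ :=
  ⟨Wedge.elim a.1 b.1 (a.2.trans b.2.symm), a.2⟩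

/-- `a # b = (a ∇ b) ∘ μ`. -/
def hashP (μ : C(X, Wedge X X x₀ x₀)) (hμ : μ x₀ = Wedge.pt X X x₀ x₀)
    (a b : PtdMap X Y x₀ y₀) : PtdMap X Y x₀ y₀ :=
  ⟨(wedgeElimP a b).1.comp μ, by
    rw [ContinuousMap.comp_apply, hμ]; exact (wedgeElimP a b).2⟩

/-- `a† = a ∘ ν`. -/
def daggerP (ν : C(X, X)) (hν : ν x₀ = x₀) (a : PtdMap X Y x₀ y₀) : PtdMap X Y x₀ y₀ :=
  ⟨a.1.comp ν, by rw [ContinuousMap.comp_apply, hν]; exact a.2⟩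

end Ptd

/-- The setoid of basepoint-preserving homotopy. -/
def PSetoid (X Y : Type*) [TopologicalSpace X] [TopologicalSpace Y] (x₀ : X) (y₀ : Y) :
    Setoid (PtdMap X Y x₀ y₀) :=
  ⟨PHtpc, ⟨fun a => ContinuousMap.HomotopicRel.refl a.1,
    fun h => h.symm, fun h₁ h₂ => h₁.trans h₂⟩⟩

/-- The set `[X, Y]` of pointed homotopy classes. -/
def HCls (X Y : Type*) [TopologicalSpace X] [TopologicalSpace Y] (x₀ : X) (y₀ : Y) :=
  Quotient (PSetoid X Y x₀ y₀)

/-- The homotopy class `[a]` of a pointed map `a`. -/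
def cls {X Y : Type*} [TopologicalSpace X] [TopologicalSpace Y] {x₀ : X} {y₀ : Y}
    (a : PtdMap X Y x₀ y₀) : HCls X Y x₀ y₀ :=
  Quotient.mk _ a

/-- For `r ≥ 0`, `simSet r` is the subset `[X,Y]^{(r+1)}` of `[X,Y]`, consisting of the
classes of maps `a` with `⊲ ∼_r a`. -/
def simSet (X Y : Type*) [TopologicalSpace X] [TopologicalSpace Y] (x₀ : X) (y₀ : Y)
    (r : ℕ) : Set (HCls X Y x₀ y₀) :=
  {q | ∃ a : PtdMap X Y x₀ y₀, cls a = q ∧ similarP r constP a}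

/-!
The operations `#` and `†` preserve pointed homotopy, and their (bi)additive extensions to
`⟨Y^X⟩` preserve the filtration `⟨Y^X⟩^{(r+1)}`: the restriction of `a # b` to a finite set `T`
only depends on the restrictions of `a` and `b` to the points of the two wedge summands hit by
`μ(T)`, and each of these sets has at most `|T|` points; likewise `a†|_T` only depends on
`a|_{ν(T)}`. So if `A ≡_r ⟨b⟩` and `B ≡_r ⟨b'⟩` with `A`, `B` supported on maps homotopic to
`a`, `a'`, then `A # B` is supported on maps homotopic to `a # a'`, and
`A # B - ⟨b # b'⟩ = A # (B - ⟨b'⟩) + (A - ⟨b⟩) # ⟨b'⟩ ≡_r 0`. Since `⊲ # ⊲ = ⊲ = ⊲†`, the classes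
`[a]` with `⊲ ∼_r a` are closed under products and inverses.
-/

open Set Function

theorem Finsupp.mapDomain_eq_zero_of_factorsThrough {α β γ M : Type*} [AddCommMonoid M]
    {f : α → β} {g : α → γ} (hgf : g.FactorsThrough f) {A : α →₀ M}
    (hA : A.mapDomain f = 0) : A.mapDomain g = 0 := by
  rcases isEmpty_or_nonempty α with hα | ⟨⟨a⟩⟩
  · simp [Subsingleton.elim A 0]
  · rw [← hgf.extend_comp fun _ => g a, Finsupp.mapDomain_comp, hA, Finsupp.mapDomain_zero]

theorem Set.Finite.ncard_preimage_le {α β : Type*} {f : α → β} (hf : Injective f) {s : Set β}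
    (hs : s.Finite) : (f ⁻¹' s).ncard ≤ s.ncard := by
  rw [← ncard_image_of_injective _ hf]
  exact ncard_le_ncard (image_preimage_subset f s) hs

theorem ContinuousMap.HomotopicRel.comp_right {W X Y : Type*} [TopologicalSpace W]
    [TopologicalSpace X] [TopologicalSpace Y] {f₀ f₁ : C(X, Y)} {S : Set X} {T : Set W}
    (h : f₀.HomotopicRel f₁ S) (g : C(W, X)) (hg : MapsTo g T S) :
    (f₀.comp g).HomotopicRel (f₁.comp g) T := by
  obtain ⟨F⟩ := h
  exact ⟨⟨F.toHomotopy.compContinuousMap g, fun t x hx => F.prop t (g x) (hg hx)⟩⟩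

namespace Wedge

variable {X₁ X₂ : Type*} [TopologicalSpace X₁] [TopologicalSpace X₂] {p₁ : X₁} {p₂ : X₂}

theorem inl_injective : Injective (inl X₁ X₂ p₁ p₂) := fun _ _ h =>
  congrArg (Quot.lift (Sum.elim id fun _ => p₁) (by rintro _ _ ⟨rfl, rfl⟩; rfl)) h

theorem inr_injective : Injective (inr X₁ X₂ p₁ p₂) := fun _ _ h =>
  congrArg (Quot.lift (Sum.elim (fun _ => p₂) id) (by rintro _ _ ⟨rfl, rfl⟩; rfl)) h

theorem exists_eq_inl_or_inr (w : Wedge X₁ X₂ p₁ p₂) :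
    (∃ x, inl X₁ X₂ p₁ p₂ x = w) ∨ ∃ x, inr X₁ X₂ p₁ p₂ x = w := by
  obtain ⟨s | s, rfl⟩ := Quot.exists_rep w
  exacts [.inl ⟨s, rfl⟩, .inr ⟨s, rfl⟩]

variable {Y : Type*} [TopologicalSpace Y]

@[simp]
theorem elim_inl (a : C(X₁, Y)) (b : C(X₂, Y)) (hab : a p₁ = b p₂) (x : X₁) :
    elim a b hab (inl X₁ X₂ p₁ p₂ x) = a x := rfl

@[simp]
theorem elim_inr (a : C(X₁, Y)) (b : C(X₂, Y)) (hab : a p₁ = b p₂) (x : X₂) :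
    elim a b hab (inr X₁ X₂ p₁ p₂ x) = b x := rfl

theorem elim_pt (a : C(X₁, Y)) (b : C(X₂, Y)) (hab : a p₁ = b p₂) :
    elim a b hab (pt X₁ X₂ p₁ p₂) = a p₁ := rfl

/-- The homotopies are glued as maps into the path space `C(I, Y)`, which sidesteps the
question whether `I × (X₁ ∨ X₂)` carries the quotient topology. -/
theorem homotopicRel_elim {a a' : C(X₁, Y)} {b b' : C(X₂, Y)} (ha : a.HomotopicRel a' {p₁})
    (hb : b.HomotopicRel b' {p₂}) (hab : a p₁ = b p₂) (hab' : a' p₁ = b' p₂) :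
    (elim a b hab).HomotopicRel (elim a' b' hab') {pt X₁ X₂ p₁ p₂} := by
  obtain ⟨H⟩ := ha
  obtain ⟨K⟩ := hb
  have hpt : (H.toContinuousMap.comp .prodSwap).curry p₁ =
      (K.toContinuousMap.comp .prodSwap).curry p₂ := by
    ext t
    simp [H.eq_fst t rfl, K.eq_fst t rfl, hab]
  set G := (elim _ _ hpt).uncurry.comp .prodSwap
  have hG : ∀ t w, G (t, w) = elim _ _ hpt w t := fun _ _ => rfl
  refine ⟨⟨⟨G, fun w => ?_, fun w => ?_⟩, fun t w hw => ?_⟩⟩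
  · rcases exists_eq_inl_or_inr w with ⟨x, rfl⟩ | ⟨x, rfl⟩ <;> simp [hG]
  · rcases exists_eq_inl_or_inr w with ⟨x, rfl⟩ | ⟨x, rfl⟩ <;> simp [hG]
  · rw [mem_singleton_iff.mp hw]
    simp [hG, elim_pt, H.eq_fst t rfl]

end Wedge

section Ptd

variable {X Y : Type*} [TopologicalSpace X] [TopologicalSpace Y] {x₀ : X} {y₀ : Y}

noncomputable def filtP (s : ℕ) : AddSubgroup (PtdMap X Y x₀ y₀ →₀ ℤ) :=
  ⨅ (T : Set X) (_ : T.Finite) (_ : T.ncard < s), (restrictEnsP T).ker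

theorem mem_filtP {s : ℕ} {A : PtdMap X Y x₀ y₀ →₀ ℤ} : A ∈ filtP s ↔ inFiltP s A := by
  simp [filtP, AddSubgroup.mem_iInf, inFiltP]

theorem mapDomain_mem_filtP {X' Y' : Type*} [TopologicalSpace X'] [TopologicalSpace Y']
    {x₀' : X'} {y₀' : Y'} {F : PtdMap X Y x₀ y₀ → PtdMap X' Y' x₀' y₀'}
    (hF : ∀ T : Set X', T.Finite → ∃ S : Set X, S.Finite ∧ S.ncard ≤ T.ncard ∧
      ∀ c c', EqOn c.1 c'.1 S → EqOn (F c).1 (F c').1 T)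
    {s : ℕ} {A : PtdMap X Y x₀ y₀ →₀ ℤ} (hA : A ∈ filtP s) : A.mapDomain F ∈ filtP s := by
  rw [mem_filtP] at hA ⊢
  intro T hT hTs
  obtain ⟨S, hS, hST, hFS⟩ := hF T hT
  have hfac : FactorsThrough (fun c => (F c).1.restrict T) fun c => c.1.restrict S :=
    fun c c' h => ContinuousMap.ext fun t =>
      hFS c c' (fun x hx => DFunLike.congr_fun h ⟨x, hx⟩) t.2
  rw [restrictEnsP, Finsupp.mapDomain.addMonoidHom_apply, ← Finsupp.mapDomain_comp]
  exact Finsupp.mapDomain_eq_zero_of_factorsThrough hfac (hA S hS (hST.trans_lt hTs))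

theorem similarP_refl (r : ℕ) (a : PtdMap X Y x₀ y₀) : similarP r a a := by
  refine ⟨Finsupp.single a 1, fun c hc => ?_, ?_⟩
  · rw [Finset.mem_singleton.mp (Finsupp.support_single_subset hc)]
    exact ContinuousMap.HomotopicRel.refl _
  · rw [sub_self, ← mem_filtP]
    exact zero_mem _

section Dagger

variable (ν : C(X, X)) (hν : ν x₀ = x₀)

theorem daggerP_constP : daggerP ν hν (constP : PtdMap X Y x₀ y₀) = constP := rfl

theorem PHtpc.dagger {a b : PtdMap X Y x₀ y₀} (h : PHtpc a b) :
    PHtpc (daggerP ν hν a) (daggerP ν hν b) :=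
  ContinuousMap.HomotopicRel.comp_right h ν (by simpa using hν)

theorem mapDomain_daggerP_mem_filtP {s : ℕ} {A : PtdMap X Y x₀ y₀ →₀ ℤ} (hA : A ∈ filtP s) :
    A.mapDomain (daggerP ν hν) ∈ filtP s :=
  mapDomain_mem_filtP (fun T hT => ⟨ν '' T, hT.image ν, ncard_image_le hT,
    fun _ _ h x hx => h (x := ν x) (mem_image_of_mem ν hx)⟩) hA

theorem similarP.dagger {r : ℕ} {a b : PtdMap X Y x₀ y₀} (h : similarP r a b) :
    similarP r (daggerP ν hν a) (daggerP ν hν b) := by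
  classical
  obtain ⟨A, hA, hAb⟩ := h
  refine ⟨A.mapDomain (daggerP ν hν), fun e he => ?_, ?_⟩
  · obtain ⟨c, hc, rfl⟩ := Finset.mem_image.mp (Finsupp.mapDomain_support he)
    exact (hA c hc).dagger ν hν
  · rw [← Finsupp.mapDomain_single, ← Finsupp.mapDomain_sub, ← mem_filtP]
    exact mapDomain_daggerP_mem_filtP ν hν (mem_filtP.mpr hAb)

end Dagger

section Hash

variable (μ : C(X, Wedge X X x₀ x₀)) (hμ : μ x₀ = Wedge.pt X X x₀ x₀)

theorem hashP_apply_of_eq_inl {a b : PtdMap X Y x₀ y₀} {x x' : X}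
    (hx : μ x = Wedge.inl X X x₀ x₀ x') : (hashP μ hμ a b).1 x = a.1 x' :=
  congrArg (wedgeElimP a b).1 hx

theorem hashP_apply_of_eq_inr {a b : PtdMap X Y x₀ y₀} {x x' : X}
    (hx : μ x = Wedge.inr X X x₀ x₀ x') : (hashP μ hμ a b).1 x = b.1 x' :=
  congrArg (wedgeElimP a b).1 hx

theorem hashP_constP : hashP μ hμ (constP : PtdMap X Y x₀ y₀) constP = constP := by
  refine Subtype.ext (ContinuousMap.ext fun x => ?_)
  rcases Wedge.exists_eq_inl_or_inr (μ x) with ⟨x', hx⟩ | ⟨x', hx⟩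
  exacts [(hashP_apply_of_eq_inl μ hμ hx.symm).trans rfl,
    (hashP_apply_of_eq_inr μ hμ hx.symm).trans rfl]

theorem PHtpc.hash {a a' b b' : PtdMap X Y x₀ y₀} (ha : PHtpc a a') (hb : PHtpc b b') :
    PHtpc (hashP μ hμ a b) (hashP μ hμ a' b') :=
  (Wedge.homotopicRel_elim ha hb (a.2.trans b.2.symm) (a'.2.trans b'.2.symm)).comp_right μ
    (by simpa using hμ)

theorem hashP_eqOn {T : Set X} {a a' b b' : PtdMap X Y x₀ y₀}
    (ha : EqOn a.1 a'.1 (Wedge.inl X X x₀ x₀ ⁻¹' (μ '' T)))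
    (hb : EqOn b.1 b'.1 (Wedge.inr X X x₀ x₀ ⁻¹' (μ '' T))) :
    EqOn (hashP μ hμ a b).1 (hashP μ hμ a' b').1 T := by
  intro t ht
  rcases Wedge.exists_eq_inl_or_inr (μ t) with ⟨x, hx⟩ | ⟨x, hx⟩
  · rw [hashP_apply_of_eq_inl μ hμ hx.symm, hashP_apply_of_eq_inl μ hμ hx.symm]
    exact ha ⟨t, ht, hx.symm⟩
  · rw [hashP_apply_of_eq_inr μ hμ hx.symm, hashP_apply_of_eq_inr μ hμ hx.symm]
    exact hb ⟨t, ht, hx.symm⟩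

theorem mapDomain_hashP_left_mem_filtP (b : PtdMap X Y x₀ y₀) {s : ℕ}
    {A : PtdMap X Y x₀ y₀ →₀ ℤ} (hA : A ∈ filtP s) :
    A.mapDomain (hashP μ hμ · b) ∈ filtP s :=
  mapDomain_mem_filtP (fun _ hT => ⟨_, (hT.image μ).preimage Wedge.inl_injective.injOn,
    ((hT.image μ).ncard_preimage_le Wedge.inl_injective).trans (ncard_image_le hT),
    fun _ _ h => hashP_eqOn μ hμ h (eqOn_refl _ _)⟩) hA

theorem mapDomain_hashP_right_mem_filtP (a : PtdMap X Y x₀ y₀) {s : ℕ}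
    {B : PtdMap X Y x₀ y₀ →₀ ℤ} (hB : B ∈ filtP s) :
    B.mapDomain (hashP μ hμ a) ∈ filtP s :=
  mapDomain_mem_filtP (fun _ hT => ⟨_, (hT.image μ).preimage Wedge.inr_injective.injOn,
    ((hT.image μ).ncard_preimage_le Wedge.inr_injective).trans (ncard_image_le hT),
    fun _ _ h => hashP_eqOn μ hμ (eqOn_refl _ _) h⟩) hB

noncomputable def hashSum (A B : PtdMap X Y x₀ y₀ →₀ ℤ) : PtdMap X Y x₀ y₀ →₀ ℤ :=
  A.sum fun c u => u • B.mapDomain (hashP μ hμ c)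

theorem exists_of_mem_support_hashSum {A B : PtdMap X Y x₀ y₀ →₀ ℤ} {e : PtdMap X Y x₀ y₀}
    (he : e ∈ (hashSum μ hμ A B).support) :
    ∃ c ∈ A.support, ∃ d ∈ B.support, hashP μ hμ c d = e := by
  classical
  obtain ⟨c, hc, he⟩ := Finset.mem_biUnion.mp (Finsupp.support_sum he)
  obtain ⟨d, hd, rfl⟩ := Finset.mem_image.mp (Finsupp.mapDomain_support (Finsupp.support_smul he))
  exact ⟨c, hc, d, hd, rfl⟩

theorem hashSum_sub_single (A B : PtdMap X Y x₀ y₀ →₀ ℤ) (a b : PtdMap X Y x₀ y₀) :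
    hashSum μ hμ A B - Finsupp.single (hashP μ hμ a b) 1 =
      hashSum μ hμ A (B - Finsupp.single b 1) +
        (A - Finsupp.single a 1).mapDomain (hashP μ hμ · b) := by
  have hA : A.mapDomain (hashP μ hμ · b) = A.sum fun c u => Finsupp.single (hashP μ hμ c b) u :=
    rfl
  simp only [hashSum, Finsupp.mapDomain_sub, Finsupp.mapDomain_single, smul_sub,
    Finsupp.smul_single, smul_eq_mul, mul_one, Finsupp.sum_sub, hA]
  abel

theorem hashSum_mem_filtP (A : PtdMap X Y x₀ y₀ →₀ ℤ) {s : ℕ} {B : PtdMap X Y x₀ y₀ →₀ ℤ}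
    (hB : B ∈ filtP s) : hashSum μ hμ A B ∈ filtP s :=
  sum_mem fun c _ => zsmul_mem (mapDomain_hashP_right_mem_filtP μ hμ c hB) _

theorem similarP.hash {r : ℕ} {a a' b b' : PtdMap X Y x₀ y₀} (h : similarP r a b)
    (h' : similarP r a' b') : similarP r (hashP μ hμ a a') (hashP μ hμ b b') := by
  obtain ⟨A, hA, hAb⟩ := h
  obtain ⟨B, hB, hBb⟩ := h'
  refine ⟨hashSum μ hμ A B, fun e he => ?_, ?_⟩
  · obtain ⟨c, hc, d, hd, rfl⟩ := exists_of_mem_support_hashSum μ hμ he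
    exact (hA c hc).hash μ hμ (hB d hd)
  · rw [← mem_filtP] at hAb hBb ⊢
    rw [hashSum_sub_single]
    exact add_mem (hashSum_mem_filtP μ hμ A hBb) (mapDomain_hashP_left_mem_filtP μ hμ b' hAb)

end Hash

end Ptd

theorem stmt3_general {X Y : Type*} [TopologicalSpace X] [TopologicalSpace Y] (x₀ : X) (y₀ : Y)
    -- the comultiplication and coinversion
    (μ : C(X, Wedge X X x₀ x₀)) (hμ : μ x₀ = Wedge.pt X X x₀ x₀)
    (ν : C(X, X)) (hν : ν x₀ = x₀)
    -- admissibility hypothesis: multiplication and inversion are well defined on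
    -- homotopy classes (being given by functions on `[X,Y]`), are induced by `#` and `†`,
    -- and make `[X,Y]` a group with identity `[⊲]`
    (mul : HCls X Y x₀ y₀ → HCls X Y x₀ y₀ → HCls X Y x₀ y₀)
    (inv : HCls X Y x₀ y₀ → HCls X Y x₀ y₀)
    (hmul : ∀ a b : PtdMap X Y x₀ y₀, mul (cls a) (cls b) = cls (hashP μ hμ a b))
    (hinv : ∀ a : PtdMap X Y x₀ y₀, inv (cls a) = cls (daggerP ν hν a))
    (r : ℕ) :
    cls (constP : PtdMap X Y x₀ y₀) ∈ simSet X Y x₀ y₀ r ∧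
      (∀ p ∈ simSet X Y x₀ y₀ r, ∀ q ∈ simSet X Y x₀ y₀ r,
        mul p q ∈ simSet X Y x₀ y₀ r) ∧
      (∀ p ∈ simSet X Y x₀ y₀ r, inv p ∈ simSet X Y x₀ y₀ r) := by
  refine ⟨⟨constP, rfl, similarP_refl r constP⟩, ?_, ?_⟩
  · rintro _ ⟨a, rfl, ha⟩ _ ⟨b, rfl, hb⟩
    refine ⟨hashP μ hμ a b, (hmul a b).symm, ?_⟩
    simpa only [hashP_constP] using ha.hash μ hμ hb
  · rintro _ ⟨a, rfl, ha⟩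
    refine ⟨daggerP ν hν a, (hinv a).symm, ?_⟩
    simpa only [daggerP_constP] using ha.dagger ν hν

/-- Theorem 4.1: `[X,Y]^{(r+1)}` is a subgroup of the group `[X,Y]`: it contains the
identity `1 = [⊲]` and is closed under the multiplication and the inversion. -/
theorem stmt3 {X Y : Type*} [TopologicalSpace X] [TopologicalSpace Y] (x₀ : X) (y₀ : Y)
    -- the comultiplication and coinversion
    (μ : C(X, Wedge X X x₀ x₀)) (hμ : μ x₀ = Wedge.pt X X x₀ x₀)
    (ν : C(X, X)) (hν : ν x₀ = x₀)
    -- admissibility hypothesis: multiplication and inversion are well defined on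
    -- homotopy classes (being given by functions on `[X,Y]`), are induced by `#` and `†`,
    -- and make `[X,Y]` a group with identity `[⊲]`
    (mul : HCls X Y x₀ y₀ → HCls X Y x₀ y₀ → HCls X Y x₀ y₀)
    (inv : HCls X Y x₀ y₀ → HCls X Y x₀ y₀)
    (hmul : ∀ a b : PtdMap X Y x₀ y₀, mul (cls a) (cls b) = cls (hashP μ hμ a b))
    (hinv : ∀ a : PtdMap X Y x₀ y₀, inv (cls a) = cls (daggerP ν hν a))
    (hassoc : ∀ p q s : HCls X Y x₀ y₀, mul (mul p q) s = mul p (mul q s))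
    (hone_mul : ∀ p, mul (cls (constP : PtdMap X Y x₀ y₀)) p = p)
    (hmul_one : ∀ p, mul p (cls (constP : PtdMap X Y x₀ y₀)) = p)
    (hinv_mul : ∀ p, mul (inv p) p = cls (constP : PtdMap X Y x₀ y₀))
    (r : ℕ) :
    cls (constP : PtdMap X Y x₀ y₀) ∈ simSet X Y x₀ y₀ r ∧
      (∀ p ∈ simSet X Y x₀ y₀ r, ∀ q ∈ simSet X Y x₀ y₀ r,
        mul p q ∈ simSet X Y x₀ y₀ r) ∧
      (∀ p ∈ simSet X Y x₀ y₀ r, inv p ∈ simSet X Y x₀ y₀ r) :=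
  stmt3_general x₀ y₀ μ hμ ν hν mul inv hmul hinv r
end

section
/- Assume the admissibility hypothesis. For s ≥ 1 put M^s = [X,Y]^{(s)} ⊆ [X,Y]. Then for all p, q ≥ 1, the group commutator satisfies [[M^p, M^q]] ⊆ M^{p+q}; that is, for any 𝐚 ∈ [X,Y]^{(p)} and 𝐛 ∈ [X,Y]^{(q)}, the commutator 𝐚⁻¹𝐛⁻¹𝐚𝐛 lies in [X,Y]^{(p+q)}. -/
/-!
Extending `#` bilinearly makes the free abelian group `ℤ[Y^X]` a non-associative ring, and the
filtration `⟨Y^X⟩^{(s)}` is multiplicative, `F^p · F^q ⊆ F^{p+q}`: the restriction of `a # b` to a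
finite set `T` only depends on the restrictions of `a` and `b` to two sets whose sizes add up to at
most `|T|`, because `μ` sends each point of `T` into one of the two wedge summands. Coinversion
preserves the filtration for the same reason.

Now let `A ≡ a` (mod `F^p`) and `B ≡ b` (mod `F^q`) be combinations of null-homotopic maps, and
`A† ≡ a†`, `B† ≡ b†` their images under `†`. Then `a†B†aB + A†b†Ab - A†B†AB` is again a combination
of null-homotopic maps, since `[a]⁻¹[a] = [b]⁻¹[b] = 1`, and it differs from `a†b†ab` by a sum of
products each containing one factor from `F^p` and one from `F^q`.
-/

open MonoidAlgebra Pointwise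

section FilteredRing

variable {ι R : Type*} [AddCommMonoid ι] [NonUnitalNonAssocRing R] {F : ι → AddSubgroup R}
  [SetLike.GradedMul F]

theorem mul_mul_mul_add_sub_sub_mem (hF0 : ∀ x, x ∈ F 0) {p q : ι}
    {u u' U U' v v' V V' : R} (hU : U - u ∈ F p) (hU' : U' - u' ∈ F p)
    (hV : V - v ∈ F q) (hV' : V' - v' ∈ F q) :
    u' * V' * u * V + U' * v' * U * v - U' * V' * U * V - u' * v' * u * v ∈ F (p + q) := by
  have mul_mem_left {i : ι} {x : R} (y : R) (hx : x ∈ F i) : x * y ∈ F i :=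
    add_zero i ▸ SetLike.mul_mem_graded hx (hF0 y)
  have mul_mem_right {j : ι} {y : R} (x : R) (hy : y ∈ F j) : x * y ∈ F j :=
    zero_add j ▸ SetLike.mul_mem_graded (hF0 x) hy
  obtain ⟨α, hα, rfl⟩ : ∃ α ∈ F p, U = u + α := ⟨U - u, hU, by abel⟩
  obtain ⟨α', hα', rfl⟩ : ∃ α' ∈ F p, U' = u' + α' := ⟨U' - u', hU', by abel⟩
  obtain ⟨β, hβ, rfl⟩ : ∃ β ∈ F q, V = v + β := ⟨V - v, hV, by abel⟩
  obtain ⟨β', hβ', rfl⟩ : ∃ β' ∈ F q, V' = v' + β' := ⟨V' - v', hV', by abel⟩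
  have expand : u' * (v' + β') * u * (v + β) + (u' + α') * v' * (u + α) * v
        - (u' + α') * (v' + β') * (u + α) * (v + β) - u' * v' * u * v
      = -(α' * β' * (u + α) * (v + β) + α' * v' * (u + α) * β
          + u' * β' * α * (v + β) + u' * v' * α * β) := by
    simp only [add_mul, mul_add]
    abel
  rw [expand]
  refine neg_mem (add_mem (add_mem (add_mem ?_ ?_) ?_) ?_)
  · exact mul_mem_left _ (mul_mem_left _ (SetLike.mul_mem_graded hα' hβ'))
  · exact SetLike.mul_mem_graded (mul_mem_left _ (mul_mem_left _ hα')) hβ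
  · exact mul_mem_left _ (add_comm q p ▸ SetLike.mul_mem_graded (mul_mem_right _ hβ') hα)
  · exact SetLike.mul_mem_graded (mul_mem_right _ hα) hβ

end FilteredRing

namespace MonoidAlgebra

section Semiring

variable {k G H : Type*} [Semiring k]

theorem mapDomain_mapDomain {α β : Type*} (f : α → β) (g : G → α) (x : k[G]) :
    mapDomain f (mapDomain g x) = mapDomain (f ∘ g) x :=
  ext Finsupp.mapDomain_comp.symm

theorem mapDomain_mul_eq_zero [Mul G] {α β γ : Type*} {ρ₁ : G → α} {ρ₂ : G → β} {ρ : G → γ}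
    (Φ : α → β → γ) (hρ : ∀ g₁ g₂, ρ (g₁ * g₂) = Φ (ρ₁ g₁) (ρ₂ g₂)) {x y : k[G]}
    (h : mapDomain ρ₁ x = 0 ∨ mapDomain ρ₂ y = 0) : mapDomain ρ (x * y) = 0 := by
  classical
  have key : (mapDomain ρ (x * y)).coeff = (mapDomain ρ₁ x).coeff.sum fun a r₁ =>
      (mapDomain ρ₂ y).coeff.sum fun b r₂ => Finsupp.single (Φ a b) (r₁ * r₂) := by
    have inner (a : α) (r₁ : k) : (mapDomain ρ₂ y).coeff.sum
        (fun b r₂ => Finsupp.single (Φ a b) (r₁ * r₂))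
          = y.coeff.sum fun g₂ r₂ => Finsupp.single (Φ a (ρ₂ g₂)) (r₁ * r₂) :=
      Finsupp.sum_mapDomain_index (by simp) (by simp [mul_add])
    rw [coeff_mapDomain, coeff_mapDomain, Finsupp.sum_mapDomain_index (by simp)
      (by simp [add_mul, Finsupp.sum_add])]
    simp only [inner, mul_def, coeff_finsuppSum, coeff_single, Finsupp.mapDomain_sum,
      Finsupp.mapDomain_single, hρ]
  rw [← coeff_eq_zero, key]
  rcases h with h | h <;> simp [h]

theorem mul_mem_supported_preimage [Mul G] [Mul H] (φ : G →ₙ* H) {S T : Set H} {x y : k[G]}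
    (hx : x ∈ supported k k (φ ⁻¹' S)) (hy : y ∈ supported k k (φ ⁻¹' T)) :
    x * y ∈ supported k k (φ ⁻¹' (S * T)) := by
  classical
  rw [mem_supported] at hx hy ⊢
  intro g hg
  obtain ⟨g₁, hg₁, g₂, hg₂, rfl⟩ := Finset.mem_mul.mp (support_coeff_mul_subset x y hg)
  exact Set.mem_mul.mpr ⟨_, hx hg₁, _, hy hg₂, (map_mul φ g₁ g₂).symm⟩

end Semiring

section Ring

variable {k G H : Type*} [Ring k]

def approxBy {ι : Type*} (N : Set G) (F : ι → AddSubgroup k[G]) (s : ι) : Set G :=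
  {g | ∃ A ∈ supported k k N, A - single g 1 ∈ F s}

theorem mapDomain_mem_approxBy {ι : Type*} {N : Set G} {F : ι → AddSubgroup k[G]} {f : G → G}
    (hN : Set.MapsTo f N N) (hF : ∀ s A, A ∈ F s → mapDomain f A ∈ F s) {s : ι} {g : G}
    (hg : g ∈ approxBy N F s) : f g ∈ approxBy N F s := by
  obtain ⟨A, hA, hAg⟩ := hg
  refine ⟨mapDomain f A, ?_, ?_⟩
  · classical
    rw [mem_supported] at hA ⊢
    intro x hx
    obtain ⟨y, hy, rfl⟩ := Finset.mem_image.mp (Finsupp.mapDomain_support hx)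
    exact hN (hA hy)
  · have hsub : mapDomain f (A - single g 1) = mapDomain f A - mapDomain f (single g 1) :=
      map_sub (mapDomainLinearMap k k f) A _
    simpa only [hsub, mapDomain_single] using hF s _ hAg

theorem mul_mul_mul_mem_approxBy {ι : Type*} [AddCommMonoid ι] [Mul G] [MulOneClass H]
    (φ : G →ₙ* H) {F : ι → AddSubgroup k[G]} [SetLike.GradedMul F] (hF0 : ∀ x, x ∈ F 0)
    {p q : ι} {a a' b b' : G}
    (ha : a ∈ approxBy (φ ⁻¹' {1}) F p) (ha' : a' ∈ approxBy (φ ⁻¹' {1}) F p)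
    (haa' : φ a' * φ a = 1)
    (hb : b ∈ approxBy (φ ⁻¹' {1}) F q) (hb' : b' ∈ approxBy (φ ⁻¹' {1}) F q)
    (hbb' : φ b' * φ b = 1) :
    a' * b' * a * b ∈ approxBy (φ ⁻¹' {1}) F (p + q) := by
  obtain ⟨A, hA, hAa⟩ := ha
  obtain ⟨A', hA', hAa'⟩ := ha'
  obtain ⟨B, hB, hBb⟩ := hb
  obtain ⟨B', hB', hBb'⟩ := hb'
  have single_mem (g : G) : single g (1 : k) ∈ supported k k (φ ⁻¹' {φ g}) := by
    intro x hx
    obtain rfl := Finset.mem_singleton.mp (Finsupp.support_single_subset hx)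
    rfl
  have mem {S T : Set H} {x y : k[G]} (hx : x ∈ supported k k (φ ⁻¹' S))
      (hy : y ∈ supported k k (φ ⁻¹' T)) : x * y ∈ supported k k (φ ⁻¹' (S * T)) :=
    mul_mem_supported_preimage φ hx hy
  refine ⟨(single a' 1 : k[G]) * B' * single a 1 * B + A' * single b' 1 * A * single b 1
    - A' * B' * A * B, sub_mem (add_mem ?_ ?_) ?_, ?_⟩
  · simpa [Set.singleton_mul_singleton, haa'] using
      mem (mem (mem (single_mem a') hB') (single_mem a)) hB
  · simpa [Set.singleton_mul_singleton, hbb'] using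
      mem (mem (mem hA' (single_mem b')) hA) (single_mem b)
  · simpa [Set.singleton_mul_singleton] using mem (mem (mem hA' hB') hA) hB
  · simpa only [single_mul_single, mul_one] using
      mul_mul_mul_add_sub_sub_mem hF0 hAa hAa' hBb hBb'

end Ring

end MonoidAlgebra

theorem Set.ncard_preimage_inl_add_ncard_preimage_inr {α β : Type*} {U : Set (α ⊕ β)}
    (hU : U.Finite) : (Sum.inl ⁻¹' U).ncard + (Sum.inr ⁻¹' U).ncard = U.ncard := by
  lift U to Finset (α ⊕ β) using hU
  have hl : Sum.inl ⁻¹' (U : Set (α ⊕ β)) = U.toLeft := by ext; simp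
  have hr : Sum.inr ⁻¹' (U : Set (α ⊕ β)) = U.toRight := by ext; simp
  rw [hl, hr, Set.ncard_coe_finset, Set.ncard_coe_finset, Set.ncard_coe_finset,
    Finset.card_toLeft_add_card_toRight]

theorem exists_restrict_sumElim_comp_eq {ι α β γ : Type*} (m : ι → α ⊕ β) (T : Set ι) :
    ∃ Φ : (Sum.inl ⁻¹' (m '' T) → γ) → (Sum.inr ⁻¹' (m '' T) → γ) → (T → γ),
      ∀ f g, T.domRestrict (Sum.elim f g ∘ m)
        = Φ ((Sum.inl ⁻¹' (m '' T)).domRestrict f) ((Sum.inr ⁻¹' (m '' T)).domRestrict g) := by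
  refine ⟨fun f₁ f₂ t => match h : m t with
    | .inl x => f₁ ⟨x, t, t.2, h⟩
    | .inr x => f₂ ⟨x, t, t.2, h⟩, fun f g => ?_⟩
  funext t
  simp only [Set.domRestrict_apply, Function.comp_apply]
  split <;> rename_i x hx <;> simp [hx]

abbrev PtdMapHash {X : Type*} [TopologicalSpace X] {x₀ : X} (μ : C(X, Wedge X X x₀ x₀))
    (_hμ : μ x₀ = Wedge.pt X X x₀ x₀) (Y : Type*) [TopologicalSpace Y] (y₀ : Y) : Type _ :=
  PtdMap X Y x₀ y₀

instance {X Y : Type*} [TopologicalSpace X] [TopologicalSpace Y] {x₀ : X} {y₀ : Y}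
    (μ : C(X, Wedge X X x₀ x₀)) (hμ : μ x₀ = Wedge.pt X X x₀ x₀) :
    Mul (PtdMapHash μ hμ Y y₀) :=
  ⟨hashP μ hμ⟩

def PtdMap.restrict {X Y : Type*} [TopologicalSpace X] [TopologicalSpace Y] {x₀ : X} {y₀ : Y}
    (T : Set X) (a : PtdMap X Y x₀ y₀) : T → Y :=
  T.domRestrict a.1

-- `inFiltP`, with restrictions taken as plain functions: the restriction of `a # b` is then
-- assembled from those of `a` and `b` without asking for continuity on the finite set.
noncomputable def hashFiltration {X : Type*} [TopologicalSpace X] {x₀ : X}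
    (μ : C(X, Wedge X X x₀ x₀)) (hμ : μ x₀ = Wedge.pt X X x₀ x₀) (Y : Type*) [TopologicalSpace Y]
    (y₀ : Y) (s : ℕ) : AddSubgroup ℤ[PtdMapHash μ hμ Y y₀] :=
  ⨅ (T : Set X) (_ : T.Finite) (_ : T.ncard < s),
    (LinearMap.ker (mapDomainLinearMap ℤ ℤ (PtdMap.restrict T))).toAddSubgroup

section PointedMaps

variable {X Y : Type*} [TopologicalSpace X] [TopologicalSpace Y] {x₀ : X} {y₀ : Y}
  {μ : C(X, Wedge X X x₀ x₀)} {hμ : μ x₀ = Wedge.pt X X x₀ x₀}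

theorem mem_hashFiltration {s : ℕ} {A : ℤ[PtdMapHash μ hμ Y y₀]} :
    A ∈ hashFiltration μ hμ Y y₀ s ↔
      ∀ T : Set X, T.Finite → T.ncard < s → mapDomain (PtdMap.restrict T) A = 0 := by
  simp only [hashFiltration, AddSubgroup.mem_iInf, Submodule.mem_toAddSubgroup, LinearMap.mem_ker]
  rfl

theorem restrictEnsP_eq_zero_iff (T : Set X) (A : PtdMap X Y x₀ y₀ →₀ ℤ) :
    restrictEnsP T A = 0 ↔ Finsupp.mapDomain (PtdMap.restrict T) A = 0 := by
  have hcomp : Finsupp.mapDomain (PtdMap.restrict T) A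
      = Finsupp.mapDomain (fun f : C(T, Y) => ⇑f) (restrictEnsP T A) := by
    rw [restrictEnsP, Finsupp.mapDomain.addMonoidHom_apply, ← Finsupp.mapDomain_comp]
    rfl
  rw [hcomp, ← Finsupp.mapDomain_zero (f := fun f : C(T, Y) => ⇑f)]
  exact (Finsupp.mapDomain_injective DFunLike.coe_injective).eq_iff.symm

theorem hashP_val (a b : PtdMap X Y x₀ y₀) :
    (hashP μ hμ a b).1 = Sum.elim a.1 b.1 ∘ fun t => (μ t).out := by
  ext t
  change (wedgeElimP a b).1 (μ t) = _
  conv_lhs => rw [← Quot.out_eq (μ t)]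
  rfl

theorem exists_restrict_hashP_eq {T : Set X} (hT : T.Finite) :
    ∃ S₁ S₂ : Set X, S₁.Finite ∧ S₂.Finite ∧ S₁.ncard + S₂.ncard ≤ T.ncard ∧
      ∃ Φ : (S₁ → Y) → (S₂ → Y) → (T → Y), ∀ a b : PtdMap X Y x₀ y₀,
        PtdMap.restrict T (hashP μ hμ a b) = Φ (PtdMap.restrict S₁ a) (PtdMap.restrict S₂ b) := by
  set m : X → X ⊕ X := fun t => (μ t).out
  have hU : (m '' T).Finite := hT.image m
  obtain ⟨Φ, hΦ⟩ := exists_restrict_sumElim_comp_eq (γ := Y) m T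
  refine ⟨_, _, hU.preimage Sum.inl_injective.injOn, hU.preimage Sum.inr_injective.injOn, ?_,
    Φ, fun a b => ?_⟩
  · rw [Set.ncard_preimage_inl_add_ncard_preimage_inr hU]
    exact Set.ncard_image_le hT
  · rw [PtdMap.restrict, hashP_val]
    exact hΦ a.1 b.1

instance : SetLike.GradedMul (hashFiltration μ hμ Y y₀) where
  mul_mem {p q A B} hA hB := by
    rw [mem_hashFiltration] at hA hB ⊢
    intro T hT hTs
    obtain ⟨S₁, S₂, hS₁, hS₂, hcard, Φ, hΦ⟩ :=
      exists_restrict_hashP_eq (Y := Y) (y₀ := y₀) (μ := μ) (hμ := hμ) hT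
    rcases lt_or_ge S₁.ncard p with h | h
    · exact mapDomain_mul_eq_zero (G := PtdMapHash μ hμ Y y₀) Φ hΦ (.inl (hA S₁ hS₁ h))
    · exact mapDomain_mul_eq_zero (G := PtdMapHash μ hμ Y y₀) Φ hΦ
        (.inr (hB S₂ hS₂ (by omega)))

theorem mem_hashFiltration_zero (A : ℤ[PtdMapHash μ hμ Y y₀]) : A ∈ hashFiltration μ hμ Y y₀ 0 :=
  mem_hashFiltration.2 fun _ _ h => absurd h (Nat.not_lt_zero _)

theorem mapDomain_daggerP_mem_hashFiltration (ν : C(X, X)) (hν : ν x₀ = x₀) {s : ℕ}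
    {A : ℤ[PtdMapHash μ hμ Y y₀]} (hA : A ∈ hashFiltration μ hμ Y y₀ s) :
    mapDomain (daggerP ν hν) A ∈ hashFiltration μ hμ Y y₀ s := by
  rw [mem_hashFiltration] at hA ⊢
  intro T hT hTs
  have hrestrict : PtdMap.restrict T ∘ daggerP (Y := Y) (y₀ := y₀) ν hν
      = (· ∘ (Set.mapsTo_image ν T).restrict) ∘ PtdMap.restrict (ν '' T) := rfl
  rw [mapDomain_mapDomain, hrestrict, ← mapDomain_mapDomain,
    hA _ (hT.image ν) ((Set.ncard_image_le hT).trans_lt hTs), mapDomain_zero]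

theorem similarP_constP_iff {r : ℕ} {a : PtdMap X Y x₀ y₀} :
    similarP r constP a ↔ (a : PtdMapHash μ hμ Y y₀) ∈ approxBy
      {c : PtdMapHash μ hμ Y y₀ | cls c = cls constP} (hashFiltration μ hμ Y y₀) (r + 1) := by
  constructor
  · rintro ⟨A, hA, hAa⟩
    refine ⟨ofCoeff A, fun c hc => Quotient.sound (hA c hc), mem_hashFiltration.2 fun T hT hTs =>
      congrArg ofCoeff ((restrictEnsP_eq_zero_iff T _).1 (hAa T hT hTs))⟩
  · rintro ⟨A, hA, hAa⟩
    exact ⟨A.coeff, fun c hc => Quotient.exact (hA hc), fun T hT hTs =>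
      (restrictEnsP_eq_zero_iff T _).2 (congrArg coeff (mem_hashFiltration.1 hAa T hT hTs))⟩

end PointedMaps

theorem stmt6_general {X Y : Type*} [TopologicalSpace X] [TopologicalSpace Y] (x₀ : X) (y₀ : Y)
    -- the comultiplication and coinversion
    (μ : C(X, Wedge X X x₀ x₀)) (hμ : μ x₀ = Wedge.pt X X x₀ x₀)
    (ν : C(X, X)) (hν : ν x₀ = x₀)
    -- admissibility hypothesis: multiplication and inversion are well defined on
    -- homotopy classes (being given by functions on `[X,Y]`), are induced by `#` and `†`,
    -- and make `[X,Y]` a group with identity `[⊲]`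
    (mul : HCls X Y x₀ y₀ → HCls X Y x₀ y₀ → HCls X Y x₀ y₀)
    (inv : HCls X Y x₀ y₀ → HCls X Y x₀ y₀)
    (hmul : ∀ a b : PtdMap X Y x₀ y₀, mul (cls a) (cls b) = cls (hashP μ hμ a b))
    (hinv : ∀ a : PtdMap X Y x₀ y₀, inv (cls a) = cls (daggerP ν hν a))
    (hone_mul : ∀ p, mul (cls (constP : PtdMap X Y x₀ y₀)) p = p)
    (hmul_one : ∀ p, mul p (cls (constP : PtdMap X Y x₀ y₀)) = p)
    (hinv_mul : ∀ p, mul (inv p) p = cls (constP : PtdMap X Y x₀ y₀))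
    (p q : ℕ) (hp : 1 ≤ p) (hq : 1 ≤ q) :
    ∀ x ∈ simSet X Y x₀ y₀ (p - 1), ∀ y ∈ simSet X Y x₀ y₀ (q - 1),
      mul (mul (mul (inv x) (inv y)) x) y ∈ simSet X Y x₀ y₀ (p + q - 1) := by
  let _ : MulOneClass (HCls X Y x₀ y₀) :=
    { mul, one := cls constP, one_mul := hone_mul, mul_one := hmul_one }
  let φ : PtdMapHash μ hμ Y y₀ →ₙ* HCls X Y x₀ y₀ := ⟨cls, fun a b => (hmul a b).symm⟩
  have hdagger {s : ℕ} {a : PtdMapHash μ hμ Y y₀}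
      (ha : a ∈ approxBy (φ ⁻¹' {1}) (hashFiltration μ hμ Y y₀) s) :
      daggerP ν hν a ∈ approxBy (φ ⁻¹' {1}) (hashFiltration μ hμ Y y₀) s := by
    refine mapDomain_mem_approxBy (fun c (hc : cls c = cls constP) => ?_)
      (fun _ _ => mapDomain_daggerP_mem_hashFiltration ν hν) ha
    show cls (daggerP ν hν c) = cls constP
    rw [← hinv, hc]
    exact (hmul_one _).symm.trans (hinv_mul _)
  have hdagger_mul (a : PtdMapHash μ hμ Y y₀) : φ (daggerP ν hν a) * φ a = 1 := by
    show mul (cls (daggerP ν hν a)) (cls a) = cls constP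
    rw [← hinv, hinv_mul]
  rintro _ ⟨a, rfl, ha⟩ _ ⟨b, rfl, hb⟩
  rw [similarP_constP_iff (hμ := hμ), Nat.sub_add_cancel hp] at ha
  rw [similarP_constP_iff (hμ := hμ), Nat.sub_add_cancel hq] at hb
  refine ⟨_, by rw [hinv, hinv, hmul, hmul, hmul], (similarP_constP_iff (hμ := hμ)).2 ?_⟩
  rw [Nat.sub_add_cancel (by omega)]
  exact mul_mul_mul_mem_approxBy φ mem_hashFiltration_zero ha (hdagger ha) (hdagger_mul a)
    hb (hdagger hb) (hdagger_mul b)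

/-- Theorem 4.3: with `M^s = [X,Y]^{(s)}` (`s ≥ 1`), commutators satisfy
`[[M^p, M^q]] ⊆ M^{p+q}`.  Here `[X,Y]^{(s)}` is `simSet (s-1)`. -/
theorem stmt6 {X Y : Type*} [TopologicalSpace X] [TopologicalSpace Y] (x₀ : X) (y₀ : Y)
    -- the comultiplication and coinversion
    (μ : C(X, Wedge X X x₀ x₀)) (hμ : μ x₀ = Wedge.pt X X x₀ x₀)
    (ν : C(X, X)) (hν : ν x₀ = x₀)
    -- admissibility hypothesis: multiplication and inversion are well defined on
    -- homotopy classes (being given by functions on `[X,Y]`), are induced by `#` and `†`,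
    -- and make `[X,Y]` a group with identity `[⊲]`
    (mul : HCls X Y x₀ y₀ → HCls X Y x₀ y₀ → HCls X Y x₀ y₀)
    (inv : HCls X Y x₀ y₀ → HCls X Y x₀ y₀)
    (hmul : ∀ a b : PtdMap X Y x₀ y₀, mul (cls a) (cls b) = cls (hashP μ hμ a b))
    (hinv : ∀ a : PtdMap X Y x₀ y₀, inv (cls a) = cls (daggerP ν hν a))
    (hassoc : ∀ p q s : HCls X Y x₀ y₀, mul (mul p q) s = mul p (mul q s))
    (hone_mul : ∀ p, mul (cls (constP : PtdMap X Y x₀ y₀)) p = p)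
    (hmul_one : ∀ p, mul p (cls (constP : PtdMap X Y x₀ y₀)) = p)
    (hinv_mul : ∀ p, mul (inv p) p = cls (constP : PtdMap X Y x₀ y₀))
    (p q : ℕ) (hp : 1 ≤ p) (hq : 1 ≤ q) :
    ∀ x ∈ simSet X Y x₀ y₀ (p - 1), ∀ y ∈ simSet X Y x₀ y₀ (q - 1),
      mul (mul (mul (inv x) (inv y)) x) y ∈ simSet X Y x₀ y₀ (p + q - 1) :=
  stmt6_general x₀ y₀ μ hμ ν hν mul inv hmul hinv hone_mul hmul_one hinv_mul p q hp hq
end
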